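/- The gradients of η_ε, γ_ε, ξ_ε satisfy: ∇η_ε · ∇γ_ε = -½ g'(ψ_ε) η_ε γ_ε, ∇γ_ε · ∇ξ_ε = -½ g'(ψ_ε) γ_ε ξ_ε, ∇ξ_ε · ∇η_ε = -½ g'(ψ_ε) ξ_ε η_ε, and |∇η_ε|² = ½ g'(ψ_ε)(1 - η_ε²), |∇γ_ε|² = ½ g'(ψ_ε)(1 - γ_ε²), |∇ξ_ε|² = ½ g'(ψ_ε)(1 - ξ_ε²). -/

import Mathlib

noncomputable section

/-- The denominator `cosh y + ε cos x`. -/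
def KSden (ε x y : ℝ) : ℝ := Real.cosh y + ε * Real.cos x

/-- The weight `g'(ψ_ε) = 2e^{-2ψ_ε} = 2(1-ε²)/(cosh y + ε cos x)²`. -/
def KSgp (ε x y : ℝ) : ℝ := 2 * (1 - ε ^ 2) / (KSden ε x y) ^ 2

/-- `η_ε = √(1-ε²) sin x/(cosh y + ε cos x)`. -/
def KSeta (ε x y : ℝ) : ℝ := Real.sqrt (1 - ε ^ 2) * Real.sin x / KSden ε x y

/-- `γ_ε = √(1-ε²) sinh y/(cosh y + ε cos x)`. -/
def KSgam (ε x y : ℝ) : ℝ := Real.sqrt (1 - ε ^ 2) * Real.sinh y / KSden ε x y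

/-- `ξ_ε = (ε cosh y + cos x)/(cosh y + ε cos x)`. -/
def KSxi (ε x y : ℝ) : ℝ := (ε * Real.cosh y + Real.cos x) / KSden ε x y

/-- Partial derivative in the first variable. -/
def pdx (f : ℝ → ℝ → ℝ) (x y : ℝ) : ℝ := deriv (fun t => f t y) x

/-- Partial derivative in the second variable. -/
def pdy (f : ℝ → ℝ → ℝ) (x y : ℝ) : ℝ := deriv (fun t => f x t) y

/-- The Laplacian `Δf = ∂²f/∂x² + ∂²f/∂y²`. -/
def KSlap (f : ℝ → ℝ → ℝ) (x y : ℝ) : ℝ := pdx (pdx f) x y + pdy (pdy f) x y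

end

/-!
`(η_ε, γ_ε, ξ_ε)` is a conformal map into the unit sphere with conformal factor
`½ g'(ψ_ε) = (1 - ε²) / D²`, `D = cosh y + ε cos x`: the Gram matrix of the three gradients is
`½ g'(ψ_ε)` times the projection `I - u uᵀ` onto the tangent plane at `u = (η_ε, γ_ε, ξ_ε)`.
Since `D > 0` for `|ε| < 1`, each partial derivative is an explicit polynomial in
`sin x, cos x, sinh y, cosh y` over `D²`, and each identity becomes a polynomial identity modulo
`√(1-ε²)² = 1 - ε²`, `sin² x + cos² x = 1` and `cosh² y - sinh² y = 1`.
-/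

open Real

lemma pdx_eq_of_hasDerivAt {f : ℝ → ℝ → ℝ} {f' x y : ℝ}
    (h : HasDerivAt (fun t => f t y) f' x) : pdx f x y = f' :=
  h.deriv

lemma pdy_eq_of_hasDerivAt {f : ℝ → ℝ → ℝ} {f' x y : ℝ}
    (h : HasDerivAt (fun t => f x t) f' y) : pdy f x y = f' :=
  h.deriv

lemma hasDerivAt_KSden_fst (ε x y : ℝ) :
    HasDerivAt (fun t => KSden ε t y) (ε * -sin x) x :=
  ((hasDerivAt_cos x).const_mul ε).const_add _

lemma hasDerivAt_KSden_snd (ε x y : ℝ) :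
    HasDerivAt (fun t => KSden ε x t) (sinh y) y :=
  (hasDerivAt_cosh y).add_const _

section Gradients

variable {ε : ℝ}

lemma KSden_pos (hε : |ε| < 1) (x y : ℝ) : 0 < KSden ε x y := by
  have h : |ε * cos x| < 1 := by
    rw [abs_mul]
    nlinarith [abs_cos_le_one x, abs_nonneg ε, abs_nonneg (cos x)]
  unfold KSden
  linarith [neg_abs_le (ε * cos x), one_le_cosh y]

lemma sq_sqrt_one_sub_sq (hε : |ε| ≤ 1) : √(1 - ε ^ 2) ^ 2 = 1 - ε ^ 2 :=
  sq_sqrt (by nlinarith [sq_abs ε, abs_nonneg ε])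

variable (hε : |ε| < 1) (x y : ℝ)
include hε

lemma pdx_KSeta :
    pdx (KSeta ε) x y = √(1 - ε ^ 2) * (cos x * cosh y + ε) / KSden ε x y ^ 2 := by
  have hD := (KSden_pos hε x y).ne'
  rw [pdx_eq_of_hasDerivAt (f := KSeta ε)
    (((hasDerivAt_sin x).const_mul _).div (hasDerivAt_KSden_fst ε x y) hD)]
  unfold KSden at hD ⊢
  field_simp
  linear_combination √(1 - ε ^ 2) * ε * sin_sq_add_cos_sq x

lemma pdy_KSeta :
    pdy (KSeta ε) x y = -(√(1 - ε ^ 2) * sin x * sinh y) / KSden ε x y ^ 2 := by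
  have hD := (KSden_pos hε x y).ne'
  rw [pdy_eq_of_hasDerivAt (f := KSeta ε)
    ((hasDerivAt_const y _).div (hasDerivAt_KSden_snd ε x y) hD)]
  ring

lemma pdx_KSgam :
    pdx (KSgam ε) x y = √(1 - ε ^ 2) * ε * sin x * sinh y / KSden ε x y ^ 2 := by
  have hD := (KSden_pos hε x y).ne'
  rw [pdx_eq_of_hasDerivAt (f := KSgam ε)
    ((hasDerivAt_const x _).div (hasDerivAt_KSden_fst ε x y) hD)]
  ring

lemma pdy_KSgam :
    pdy (KSgam ε) x y = √(1 - ε ^ 2) * (1 + ε * cos x * cosh y) / KSden ε x y ^ 2 := by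
  have hD := (KSden_pos hε x y).ne'
  rw [pdy_eq_of_hasDerivAt (f := KSgam ε)
    (((hasDerivAt_sinh y).const_mul _).div (hasDerivAt_KSden_snd ε x y) hD)]
  unfold KSden at hD ⊢
  field_simp
  linear_combination √(1 - ε ^ 2) * cosh_sq_sub_sinh_sq y

lemma pdx_KSxi :
    pdx (KSxi ε) x y = (ε ^ 2 - 1) * sin x * cosh y / KSden ε x y ^ 2 := by
  have hD := (KSden_pos hε x y).ne'
  rw [pdx_eq_of_hasDerivAt (f := KSxi ε)
    (((hasDerivAt_cos x).const_add _).div (hasDerivAt_KSden_fst ε x y) hD)]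
  unfold KSden
  ring

lemma pdy_KSxi :
    pdy (KSxi ε) x y = (ε ^ 2 - 1) * sinh y * cos x / KSden ε x y ^ 2 := by
  have hD := (KSden_pos hε x y).ne'
  rw [pdy_eq_of_hasDerivAt (f := KSxi ε)
    ((((hasDerivAt_cosh y).const_mul ε).add_const _).div (hasDerivAt_KSden_snd ε x y) hD)]
  unfold KSden
  ring

lemma gradient_inner_KSeta_KSgam :
    pdx (KSeta ε) x y * pdx (KSgam ε) x y + pdy (KSeta ε) x y * pdy (KSgam ε) x y
      = -(1/2) * KSgp ε x y * (KSeta ε x y * KSgam ε x y) := by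
  rw [pdx_KSeta hε, pdy_KSeta hε, pdx_KSgam hε, pdy_KSgam hε]
  unfold KSgp KSeta KSgam
  ring

lemma gradient_inner_KSgam_KSxi :
    pdx (KSgam ε) x y * pdx (KSxi ε) x y + pdy (KSgam ε) x y * pdy (KSxi ε) x y
      = -(1/2) * KSgp ε x y * (KSgam ε x y * KSxi ε x y) := by
  rw [pdx_KSgam hε, pdy_KSgam hε, pdx_KSxi hε, pdy_KSxi hε]
  unfold KSgp KSgam KSxi
  linear_combination
    (√(1 - ε ^ 2) * (ε ^ 2 - 1) * sinh y * ε * cosh y / KSden ε x y ^ 4) * sin_sq_add_cos_sq x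

lemma gradient_inner_KSxi_KSeta :
    pdx (KSxi ε) x y * pdx (KSeta ε) x y + pdy (KSxi ε) x y * pdy (KSeta ε) x y
      = -(1/2) * KSgp ε x y * (KSxi ε x y * KSeta ε x y) := by
  rw [pdx_KSxi hε, pdy_KSxi hε, pdx_KSeta hε, pdy_KSeta hε]
  unfold KSgp KSxi KSeta
  linear_combination
    (√(1 - ε ^ 2) * (ε ^ 2 - 1) * sin x * cos x / KSden ε x y ^ 4) * cosh_sq_sub_sinh_sq y

lemma gradient_normSq_KSeta :
    pdx (KSeta ε) x y ^ 2 + pdy (KSeta ε) x y ^ 2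
      = (1/2) * KSgp ε x y * (1 - KSeta ε x y ^ 2) := by
  have hD := (KSden_pos hε x y).ne'
  rw [pdx_KSeta hε, pdy_KSeta hε]
  unfold KSgp KSeta
  field_simp
  rw [sq_sqrt_one_sub_sq hε.le, KSden]
  linear_combination (1 - ε ^ 2) * (cosh y ^ 2 - ε ^ 2) * sin_sq_add_cos_sq x
    - (1 - ε ^ 2) * sin x ^ 2 * cosh_sq_sub_sinh_sq y

lemma gradient_normSq_KSgam :
    pdx (KSgam ε) x y ^ 2 + pdy (KSgam ε) x y ^ 2
      = (1/2) * KSgp ε x y * (1 - KSgam ε x y ^ 2) := by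
  have hD := (KSden_pos hε x y).ne'
  rw [pdx_KSgam hε, pdy_KSgam hε]
  unfold KSgp KSgam
  field_simp
  rw [sq_sqrt_one_sub_sq hε.le, KSden]
  linear_combination (1 - ε ^ 2) * ε ^ 2 * sinh y ^ 2 * sin_sq_add_cos_sq x
    + (1 - ε ^ 2) * (ε ^ 2 * cos x ^ 2 - 1) * cosh_sq_sub_sinh_sq y

lemma gradient_normSq_KSxi :
    pdx (KSxi ε) x y ^ 2 + pdy (KSxi ε) x y ^ 2
      = (1/2) * KSgp ε x y * (1 - KSxi ε x y ^ 2) := by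
  have hD := (KSden_pos hε x y).ne'
  rw [pdx_KSxi hε, pdy_KSxi hε]
  unfold KSgp KSxi
  field_simp
  rw [KSden]
  linear_combination (1 - ε ^ 2) ^ 2 * cosh y ^ 2 * sin_sq_add_cos_sq x
    - (1 - ε ^ 2) ^ 2 * cos x ^ 2 * cosh_sq_sub_sinh_sq y

end Gradients

/-- Gradient identities for `η_ε, γ_ε, ξ_ε`: the mixed dot products equal
`-½ g'(ψ_ε)` times the products, and the squared gradients equal
`½ g'(ψ_ε)(1 - (·)²)`. -/
theorem stmt5 (ε : ℝ) (hε : ε ∈ Set.Ico (0 : ℝ) 1) (x y : ℝ) :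
    (pdx (KSeta ε) x y * pdx (KSgam ε) x y + pdy (KSeta ε) x y * pdy (KSgam ε) x y
      = -(1/2) * KSgp ε x y * (KSeta ε x y * KSgam ε x y)) ∧
    (pdx (KSgam ε) x y * pdx (KSxi ε) x y + pdy (KSgam ε) x y * pdy (KSxi ε) x y
      = -(1/2) * KSgp ε x y * (KSgam ε x y * KSxi ε x y)) ∧
    (pdx (KSxi ε) x y * pdx (KSeta ε) x y + pdy (KSxi ε) x y * pdy (KSeta ε) x y
      = -(1/2) * KSgp ε x y * (KSxi ε x y * KSeta ε x y)) ∧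
    ((pdx (KSeta ε) x y) ^ 2 + (pdy (KSeta ε) x y) ^ 2
      = (1/2) * KSgp ε x y * (1 - (KSeta ε x y) ^ 2)) ∧
    ((pdx (KSgam ε) x y) ^ 2 + (pdy (KSgam ε) x y) ^ 2
      = (1/2) * KSgp ε x y * (1 - (KSgam ε x y) ^ 2)) ∧
    ((pdx (KSxi ε) x y) ^ 2 + (pdy (KSxi ε) x y) ^ 2
      = (1/2) * KSgp ε x y * (1 - (KSxi ε x y) ^ 2)) := by
  have hε' : |ε| < 1 := abs_lt.2 ⟨by linarith [hε.1], hε.2⟩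
  exact ⟨gradient_inner_KSeta_KSgam hε' x y, gradient_inner_KSgam_KSxi hε' x y,
    gradient_inner_KSxi_KSeta hε' x y, gradient_normSq_KSeta hε' x y,
    gradient_normSq_KSgam hε' x y, gradient_normSq_KSxi hε' x y⟩
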